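/- The Hilbert-style system H⊢K is semantically incomplete with respect to the standard Kripke (TML) semantics: there exists a formula valid over the class of all frames in the TML semantics that is not provable in H⊢K. -/

import Mathlib

/-- The two sorts (types) of the two-sorted term-modal language. -/
inductive TMSort : Type
  | agt | obj
deriving DecidableEq

/-- A signature for the two-sorted term-modal language. -/
structure Sig where
  Var : Type
  Con : Type
  Fn : Type
  Rel : Type
  varSort : Var → TMSort
  conSort : Con → TMSort
  deqVar : DecidableEq Var

attribute [instance] Sig.deqVar

/-- Terms: variables, constants, function applications. -/
inductive Tm (S : Sig) : Type
  | var (x : S.Var)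
  | con (c : S.Con)
  | app (f : S.Fn) (ts : List (Tm S))

/-- Formulas of term-modal logic. -/
inductive Fm (S : Sig) : Type
  | rel (P : S.Rel) (ts : List (Tm S))
  | eq (t s : Tm S)
  | neg (φ : Fm S)
  | and (φ ψ : Fm S)
  | all (x : S.Var) (φ : Fm S)
  | know (t : Tm S) (φ : Fm S)

variable {S : Sig}

/-- Substitution of variable `y` for variable `x` in a term. -/
def Tm.substT (y x : S.Var) : Tm S → Tm S
  | .var z => if z = x then .var y else .var z
  | .con c => .con c
  | .app f ts => .app f (ts.attach.map fun t => t.1.substT y x)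


decreasing_by
  have := List.sizeOf_lt_of_mem t.2
  simp only [Tm.app.sizeOf_spec]
  omega

/-- Variables occurring in a term. -/
def Tm.fvT : Tm S → List S.Var
  | .var z => [z]
  | .con _ => []
  | .app _ ts => ts.attach.flatMap fun t => t.1.fvT


decreasing_by
  have := List.sizeOf_lt_of_mem t.2
  simp only [Tm.app.sizeOf_spec]
  omega

/-- Substitution of variable `y` for free occurrences of variable `x` in a formula. -/
def Fm.substF (y x : S.Var) : Fm S → Fm S
  | .rel P ts => .rel P (ts.map (Tm.substT y x))
  | .eq t s => .eq (t.substT y x) (s.substT y x)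
  | .neg φ => .neg (φ.substF y x)
  | .and φ ψ => .and (φ.substF y x) (ψ.substF y x)
  | .all z φ => if z = x then .all z φ else .all z (φ.substF y x)
  | .know t φ => .know (t.substT y x) (φ.substF y x)

/-- Free variables of a formula. -/
def Fm.fvF : Fm S → List S.Var
  | .rel _ ts => ts.flatMap Tm.fvT
  | .eq t s => t.fvT ++ s.fvT
  | .neg φ => φ.fvF
  | .and φ ψ => φ.fvF ++ ψ.fvF
  | .all z φ => φ.fvF.filter (· ≠ z)
  | .know t φ => t.fvT ++ φ.fvF

/-- Bound (binder) variables of a formula. -/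
def Fm.bvF : Fm S → List S.Var
  | .rel _ _ => []
  | .eq _ _ => []
  | .neg φ => φ.bvF
  | .and φ ψ => φ.bvF ++ ψ.bvF
  | .all z φ => z :: φ.bvF
  | .know _ φ => φ.bvF

/-- Defined connectives. -/
def Fm.imp (φ ψ : Fm S) : Fm S := .neg (.and φ (.neg ψ))
def Fm.ex (x : S.Var) (φ : Fm S) : Fm S := .neg (.all x (.neg φ))
def Fm.neq (t s : Tm S) : Fm S := .neg (.eq t s)

/-- The diagonal (interpretation of equality) over a domain. -/
def diag (D : Type) : Set (List D) := {l | ∃ d : D, l = [d, d]}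

/-- A non-standard model: the interpretation of constants and function symbols
depends additionally on a parameter set `X ⊆ D^n` (encoded as a set of lists),
intended to be the extension of the relation symbol they occur under. -/
structure NSModel (S : Sig) where
  D : Type
  W : Type
  hW : Nonempty W
  sortOf : D → TMSort
  hAgt : ∃ d, sortOf d = TMSort.agt
  hObj : ∃ d, sortOf d = TMSort.obj
  R : D → W → W → Prop
  Jc : S.Con → W → Set (List D) → D
  hJc : ∀ c w X, sortOf (Jc c w X) = S.conSort c
  Jf : S.Fn → W → Set (List D) → List D → D
  JP : S.Rel → W → Set (List D)

/-- Extension of a term in a non-standard model, relative to world `w`,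
parameter set `X` and valuation `v`. -/
def NSModel.extT (N : NSModel S) (w : N.W) (X : Set (List N.D)) (v : S.Var → N.D) :
    Tm S → N.D
  | .var x => v x
  | .con c => N.Jc c w X
  | .app f ts => N.Jf f w X (ts.attach.map fun t => N.extT w X v t.1)


decreasing_by
  have := List.sizeOf_lt_of_mem t.2
  simp only [Tm.app.sizeOf_spec]
  omega

/-- Satisfaction in a non-standard model. -/
def NSModel.Sat (N : NSModel S) : N.W → (S.Var → N.D) → Fm S → Prop
  | w, v, .rel P ts => (ts.map fun t => N.extT w (N.JP P w) v t) ∈ N.JP P w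
  | w, v, .eq t s => N.extT w (diag N.D) v t = N.extT w (diag N.D) v s
  | w, v, .neg φ => ¬ N.Sat w v φ
  | w, v, .and φ ψ => N.Sat w v φ ∧ N.Sat w v ψ
  | w, v, .all x φ => ∀ d : N.D, N.sortOf d = S.varSort x → N.Sat w (Function.update v x d) φ
  | w, v, .know t φ => ∀ w' : N.W, N.R (N.extT w ∅ v t) w w' → N.Sat w' v φ

/-- A valuation respecting the sorts of variables. -/
def NSModel.GoodVal (N : NSModel S) (v : S.Var → N.D) : Prop :=
  ∀ x : S.Var, N.sortOf (v x) = S.varSort x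

/-- Validity in the non-standard semantics. -/
def NSValid (φ : Fm S) : Prop :=
  ∀ (N : NSModel S) (w : N.W) (v : S.Var → N.D), N.GoodVal v → N.Sat w v φ

/-- A standard (TML) model: constants and function symbols are interpreted
world-relatively (non-rigidly), over a constant domain. -/
structure TMLModel (S : Sig) where
  D : Type
  W : Type
  hW : Nonempty W
  sortOf : D → TMSort
  hAgt : ∃ d, sortOf d = TMSort.agt
  hObj : ∃ d, sortOf d = TMSort.obj
  R : D → W → W → Prop
  Ic : S.Con → W → D
  hIc : ∀ c w, sortOf (Ic c w) = S.conSort c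
  If : S.Fn → W → List D → D
  IP : S.Rel → W → Set (List D)

/-- Extension of a term in a TML model. -/
def TMLModel.extT (M : TMLModel S) (w : M.W) (v : S.Var → M.D) : Tm S → M.D
  | .var x => v x
  | .con c => M.Ic c w
  | .app f ts => M.If f w (ts.attach.map fun t => M.extT w v t.1)


decreasing_by
  have := List.sizeOf_lt_of_mem t.2
  simp only [Tm.app.sizeOf_spec]
  omega

/-- Satisfaction in a TML model. -/
def TMLModel.Sat (M : TMLModel S) : M.W → (S.Var → M.D) → Fm S → Prop
  | w, v, .rel P ts => (ts.map fun t => M.extT w v t) ∈ M.IP P w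
  | w, v, .eq t s => M.extT w v t = M.extT w v s
  | w, v, .neg φ => ¬ M.Sat w v φ
  | w, v, .and φ ψ => M.Sat w v φ ∧ M.Sat w v ψ
  | w, v, .all x φ => ∀ d : M.D, M.sortOf d = S.varSort x → M.Sat w (Function.update v x d) φ
  | w, v, .know t φ => ∀ w' : M.W, M.R (M.extT w v t) w w' → M.Sat w' v φ

def TMLModel.GoodVal (M : TMLModel S) (v : S.Var → M.D) : Prop :=
  ∀ x : S.Var, M.sortOf (v x) = S.varSort x

/-- Validity over the class of all frames in the TML semantics. -/
def TMLValid (φ : Fm S) : Prop :=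
  ∀ (M : TMLModel S) (w : M.W) (v : S.Var → M.D), M.GoodVal v → M.Sat w v φ

/-- Propositional tautology: true under every Boolean valuation of formulas
that respects negation and conjunction. -/
def Taut (φ : Fm S) : Prop :=
  ∀ b : Fm S → Prop, (∀ ψ : Fm S, b ψ.neg ↔ ¬ b ψ) →
    (∀ ψ χ : Fm S, b (ψ.and χ) ↔ b ψ ∧ b χ) → b φ

/-- The Hilbert-style system H⊢K of Liberman et al. -/
inductive Prov : Fm S → Prop
  | taut {φ : Fm S} : Taut φ → Prov φ
  | ui {x y : S.Var} {φ : Fm S} :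
      S.varSort x = S.varSort y → y ∉ φ.bvF →
      Prov (Fm.imp (.all x φ) (φ.substF y x))
  | id {t : Tm S} : Prov (.eq t t)
  | ps {x y z : S.Var} {φ : Fm S} :
      S.varSort x = S.varSort z → S.varSort y = S.varSort z →
      x ∉ φ.bvF → y ∉ φ.bvF →
      Prov (Fm.imp (.eq (.var x) (.var y)) (Fm.imp (φ.substF x z) (φ.substF y z)))
  | eid {c : S.Con} {x : S.Var} :
      S.varSort x = S.conSort c →
      Prov (Fm.imp (.eq (.con c) (.con c)) (Fm.ex x (.eq (.var x) (.con c))))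
  | dd {x y : S.Var} :
      S.varSort x ≠ S.varSort y → Prov (Fm.neq (.var x) (.var y))
  | axK {t : Tm S} {φ ψ : Fm S} :
      Prov (Fm.imp (.know t (Fm.imp φ ψ)) (Fm.imp (.know t φ) (.know t ψ)))
  | barcan {t : Tm S} {x : S.Var} {φ : Fm S} :
      x ∉ t.fvT → Prov (Fm.imp (.all x (.know t φ)) (.know t (.all x φ)))
  | kni {t : Tm S} {x y : S.Var} :
      Prov (Fm.imp (Fm.neq (.var x) (.var y)) (.know t (Fm.neq (.var x) (.var y))))
  | mp {φ ψ : Fm S} : Prov (Fm.imp φ ψ) → Prov φ → Prov ψ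
  | nec {t : Tm S} {φ : Fm S} : Prov φ → Prov (.know t φ)
  | ug {x : S.Var} {φ ψ : Fm S} :
      x ∉ φ.fvF → Prov (Fm.imp φ ψ) → Prov (Fm.imp φ (.all x ψ))

/-! ### Auxiliary lemmas for soundness w.r.t. the non-standard semantics -/

theorem NS.extT_congr (N : NSModel S) (w : N.W) (X : Set (List N.D))
    {v v' : S.Var → N.D} (t : Tm S) (h : ∀ z ∈ t.fvT, v z = v' z) :
    N.extT w X v t = N.extT w X v' t := by
  match t with
  | .var z => simpa [NSModel.extT] using h z (by simp [Tm.fvT])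
  | .con c => simp [NSModel.extT]
  | .app f ts =>
    simp only [NSModel.extT]
    congr 1
    refine List.map_congr_left ?_
    rintro ⟨t', ht'⟩ -
    exact NS.extT_congr N w X t' (fun z hz => h z (by
      rw [Tm.fvT]
      exact List.mem_flatMap.mpr ⟨⟨t', ht'⟩, List.mem_attach _ _, hz⟩))
decreasing_by
  have := List.sizeOf_lt_of_mem ht'
  simp only [Tm.app.sizeOf_spec]
  omega


theorem NS.extT_app (N : NSModel S) (w : N.W) (X : Set (List N.D))
    (v : S.Var → N.D) (f : S.Fn) (l : List (Tm S)) :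
    N.extT w X v (.app f l) = N.Jf f w X (l.map (N.extT w X v)) := by
  rw [NSModel.extT]
  congr 1
  exact List.attach_map_val (l := l)

theorem NS.substT_lemma (N : NSModel S) (w : N.W) (X : Set (List N.D))
    (v : S.Var → N.D) (y x : S.Var) (t : Tm S) :
    N.extT w X v (t.substT y x) = N.extT w X (Function.update v x (v y)) t := by
  match t with
  | .var z =>
    by_cases hz : z = x <;>
      simp [Tm.substT, NSModel.extT, hz, Function.update]
  | .con c => simp [Tm.substT, NSModel.extT]
  | .app f ts =>
    rw [Tm.substT, NS.extT_app, NS.extT_app]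
    congr 1
    rw [List.attach_map_val, List.map_map]
    refine List.map_congr_left ?_
    intro t' ht'
    exact NS.substT_lemma N w X v y x t'
decreasing_by
  have := List.sizeOf_lt_of_mem ht'
  simp only [Tm.app.sizeOf_spec]
  omega

theorem NS.Sat_congr (N : NSModel S) (w : N.W) {v v' : S.Var → N.D}
    (φ : Fm S) (h : ∀ z ∈ φ.fvF, v z = v' z) :
    N.Sat w v φ ↔ N.Sat w v' φ := by
  induction φ generalizing v v' w with
  | rel P ts =>
    simp only [NSModel.Sat]
    have : (ts.map fun t => N.extT w (N.JP P w) v t)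
        = ts.map fun t => N.extT w (N.JP P w) v' t := by
      refine List.map_congr_left fun t ht => ?_
      exact NS.extT_congr N _ _ t fun z hz => h z (by
        simp only [Fm.fvF]; exact List.mem_flatMap.mpr ⟨t, ht, hz⟩)
    rw [this]
  | eq t s =>
    simp only [NSModel.Sat]
    rw [NS.extT_congr N w _ t fun z hz => h z (by simp [Fm.fvF, hz]),
        NS.extT_congr N w _ s fun z hz => h z (by simp [Fm.fvF, hz])]
  | neg φ ih => simp only [NSModel.Sat]; rw [ih w (fun z hz => h z hz)]
  | and φ ψ ih1 ih2 =>
    simp only [NSModel.Sat]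
    rw [ih1 w (fun z hz => h z (by simp [Fm.fvF, hz])),
        ih2 w (fun z hz => h z (by simp [Fm.fvF, hz]))]
  | all z φ ih =>
    simp only [NSModel.Sat]
    refine forall_congr' fun d => forall_congr' fun _ => ?_
    refine ih w fun u hu => ?_
    by_cases huz : u = z
    · simp [huz, Function.update]
    · simp only [Function.update, dif_neg huz]
      exact h u (by simp [Fm.fvF, List.mem_filter, hu, huz])
  | know t φ ih =>
    simp only [NSModel.Sat]
    rw [NS.extT_congr N w _ t fun z hz => h z (by simp [Fm.fvF, hz])]
    exact forall_congr' fun w' => imp_congr Iff.rfl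
      (ih w' fun z hz => h z (by simp [Fm.fvF, hz]))

theorem NS.substF_lemma (N : NSModel S) (w : N.W) (v : S.Var → N.D)
    (y x : S.Var) (φ : Fm S) (hy : y ∉ φ.bvF) :
    N.Sat w v (φ.substF y x) ↔ N.Sat w (Function.update v x (v y)) φ := by
  induction φ generalizing v w with
  | rel P ts =>
    simp only [Fm.substF, NSModel.Sat, List.map_map]
    have : (ts.map fun t => N.extT w (N.JP P w) v (t.substT y x))
        = ts.map fun t => N.extT w (N.JP P w) (Function.update v x (v y)) t := by
      exact List.map_congr_left fun t _ => NS.substT_lemma N _ _ v y x t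
    rw [show ts.map (N.extT w (N.JP P w) v ∘ Tm.substT y x)
        = ts.map fun t => N.extT w (N.JP P w) v (t.substT y x) from rfl, this]
  | eq t s =>
    simp only [Fm.substF, NSModel.Sat]
    rw [NS.substT_lemma N w _ v y x t, NS.substT_lemma N w _ v y x s]
  | neg φ ih =>
    simp only [Fm.substF, NSModel.Sat]
    rw [ih w v (by simpa [Fm.bvF] using hy)]
  | and φ ψ ih1 ih2 =>
    simp only [Fm.substF, NSModel.Sat]
    rw [ih1 w v (by simp [Fm.bvF] at hy; exact hy.1),
        ih2 w v (by simp [Fm.bvF] at hy; exact hy.2)]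
  | all z φ ih =>
    have hyz : y ≠ z := by simp [Fm.bvF] at hy; exact fun h => hy.1 h
    have hyb : y ∉ φ.bvF := by simp [Fm.bvF] at hy; exact hy.2
    by_cases hzx : z = x
    · subst hzx
      simp only [Fm.substF, if_pos rfl]
      refine NS.Sat_congr N w (.all z φ) fun u hu => ?_
      have huz : u ≠ z := by
        simp [Fm.fvF, List.mem_filter] at hu; exact hu.2
      simp [Function.update, huz]
    · simp only [Fm.substF, if_neg hzx, NSModel.Sat]
      refine forall_congr' fun d => forall_congr' fun _ => ?_
      rw [ih w (Function.update v z d) hyb]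
      have h1 : (Function.update v z d) y = v y := by
        simp [Function.update, hyz]
      rw [h1, Function.update_comm (fun h => hzx h.symm)]
  | know t φ ih =>
    simp only [Fm.substF, NSModel.Sat]
    rw [NS.substT_lemma N w _ v y x t]
    exact forall_congr' fun w' => imp_congr Iff.rfl
      (ih w' v (by simpa [Fm.bvF] using hy))

theorem NS.sat_imp (N : NSModel S) (w : N.W) (v : S.Var → N.D) (φ ψ : Fm S) :
    N.Sat w v (Fm.imp φ ψ) ↔ (N.Sat w v φ → N.Sat w v ψ) := by
  simp only [Fm.imp, NSModel.Sat]; tauto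

theorem NS.goodVal_update (N : NSModel S) {v : S.Var → N.D} (hv : N.GoodVal v)
    {x : S.Var} {d : N.D} (hd : N.sortOf d = S.varSort x) :
    N.GoodVal (Function.update v x d) := by
  intro z
  by_cases hz : z = x
  · subst hz; simpa using hd
  · simp [Function.update, hz]; exact hv z

/-- Soundness of H⊢K with respect to the non-standard semantics. -/
theorem NS.soundness {φ : Fm S} (h : Prov φ) : NSValid φ := by
  induction h with
  | @taut φ ht =>
    intro N w v _
    exact ht (N.Sat w v) (fun ψ => by simp [NSModel.Sat])
      (fun ψ χ => by simp [NSModel.Sat])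
  | @ui x y φ hsort hbv =>
    intro N w v hv
    rw [NS.sat_imp]
    intro hall
    rw [NS.substF_lemma N w v y x φ hbv]
    exact hall (v y) (by rw [hv y, hsort])
  | @id t =>
    intro N w v _
    simp [NSModel.Sat]
  | @ps x y z φ hxz hyz hbx hby =>
    intro N w v hv
    rw [NS.sat_imp]
    intro heq
    rw [NS.sat_imp]
    intro hφ
    have hxy : v x = v y := by
      simpa [NSModel.Sat, NSModel.extT] using heq
    rw [NS.substF_lemma N w v y z φ hby, ← hxy,
        ← NS.substF_lemma N w v x z φ hbx]
    exact hφ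
  | @eid c x hsort =>
    intro N w v hv
    rw [NS.sat_imp]
    intro _
    simp only [Fm.ex, NSModel.Sat]
    intro hall
    have := hall (N.Jc c w (diag N.D)) (by rw [N.hJc, ← hsort])
    simp only [NSModel.Sat, NSModel.extT] at this
    exact this (by simp [Function.update])
  | @dd x y hne =>
    intro N w v hv
    simp only [Fm.neq, NSModel.Sat, NSModel.extT]
    intro heq
    exact hne (by rw [← hv x, ← hv y, heq])
  | @axK t φ ψ =>
    intro N w v _
    rw [NS.sat_imp]
    intro h1
    rw [NS.sat_imp]
    intro h2
    simp only [NSModel.Sat] at h1 h2 ⊢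
    intro w' hr
    exact (NS.sat_imp N w' v φ ψ).mp (h1 w' hr) (h2 w' hr)
  | @barcan t x φ hfv =>
    intro N w v hv
    rw [NS.sat_imp]
    intro hall
    simp only [NSModel.Sat] at hall ⊢
    intro w' hr d hd
    refine hall d hd w' ?_
    rwa [NS.extT_congr N w ∅ t (v := Function.update v x d) (v' := v)
      (fun z hz => by
        have : z ≠ x := fun h => hfv (h ▸ hz)
        simp [Function.update, this])]
  | @kni t x y =>
    intro N w v _
    rw [NS.sat_imp]
    intro hne
    simp only [Fm.neq, NSModel.Sat, NSModel.extT] at hne ⊢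
    intro w' _
    exact hne
  | @mp φ ψ _ _ ih1 ih2 =>
    intro N w v hv
    exact (NS.sat_imp N w v φ ψ).mp (ih1 N w v hv) (ih2 N w v hv)
  | @nec t φ _ ih =>
    intro N w v hv
    simp only [NSModel.Sat]
    intro w' _
    exact ih N w' v hv
  | @ug x φ ψ hfv _ ih =>
    intro N w v hv
    rw [NS.sat_imp]
    intro hφ
    simp only [NSModel.Sat]
    intro d hd
    have hgood := NS.goodVal_update N hv hd
    have hφ' : N.Sat w (Function.update v x d) φ := by
      rwa [NS.Sat_congr N w φ (v' := v) (fun z hz => by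
        have : z ≠ x := fun h => hfv (h ▸ hz)
        simp [Function.update, this])]
    exact (NS.sat_imp N w _ φ ψ).mp (ih N w _ hgood) hφ'

/-- semantic incompleteness of H⊢K with respect to the TML semantics:
some formula valid over the class of all frames is not provable. -/
theorem stmt15 (S : Sig) (x : S.Var) (c : S.Con) (P : S.Rel)
    (h : S.varSort x = S.conSort c) :
    ∃ φ : Fm S, TMLValid φ ∧ ¬ Prov φ := by
  classical
  refine ⟨Fm.imp (.eq (.var x) (.con c))
    (Fm.imp (.rel P [.var x]) (.rel P [.con c])), ?_, ?_⟩
  · -- TML validity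
    intro M w v _
    have sat_imp : ∀ (φ ψ : Fm S) (v : S.Var → M.D),
        M.Sat w v (Fm.imp φ ψ) ↔ (M.Sat w v φ → M.Sat w v ψ) := by
      intro φ ψ v; simp only [Fm.imp, TMLModel.Sat]; tauto
    rw [sat_imp]
    intro heq
    rw [sat_imp]
    intro hP
    simp only [TMLModel.Sat, TMLModel.extT, List.map] at heq hP ⊢
    rwa [← heq]
  · -- Unprovability via the non-standard countermodel
    intro hp
    have hv := NS.soundness hp
    set D := TMSort × Bool with hD
    let N : NSModel S :=
      { D := D
        W := Unit
        hW := ⟨()⟩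
        sortOf := Prod.fst
        hAgt := ⟨(TMSort.agt, true), rfl⟩
        hObj := ⟨(TMSort.obj, true), rfl⟩
        R := fun _ _ _ => False
        Jc := fun c' _ X => (S.conSort c', if X = diag D then true else false)
        hJc := fun _ _ _ => rfl
        Jf := fun _ _ _ _ => (TMSort.agt, true)
        JP := fun _ _ => {l | l = [(S.conSort c, true)]} }
    let v0 : S.Var → N.D := fun y => (S.varSort y, true)
    have hgood : N.GoodVal v0 := fun y => rfl
    have hJP_ne : ({l | l = [(S.conSort c, true)]} : Set (List D)) ≠ diag D := by
      intro hEq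
      have : ([(TMSort.agt, true), (TMSort.agt, true)] : List D) ∈ diag D :=
        ⟨(TMSort.agt, true), rfl⟩
      rw [← hEq] at this
      simp at this
    have := hv N () v0 hgood
    rw [NS.sat_imp] at this
    have hmain := this (by
      simp only [NSModel.Sat, NSModel.extT, N, v0]
      simp [h])
    rw [NS.sat_imp] at hmain
    have hrel : N.Sat () v0 (.rel P [.var x]) := by
      simp only [NSModel.Sat, NSModel.extT, List.map]
      show [v0 x] ∈ N.JP P ()
      simp only [v0, h]
      rfl
    have hbad := hmain hrel
    simp only [NSModel.Sat, NSModel.extT, List.map, N] at hbad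
    rw [if_neg hJP_ne] at hbad
    have hbad' : ([(S.conSort c, false)] : List D) = [(S.conSort c, true)] := hbad
    exact Bool.false_ne_true
      (congrArg Prod.snd (List.head_eq_of_cons_eq hbad'))
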